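/- arXiv:1405.6669 — 2 statements merged into one kernel-verified Lean document; each statement's English description precedes it below -/
import Mathlib

section
/- Let $G$ be a group, $l \ge 1$, and let $a_1,\dots,a_{2l+1}$ be elements of $G$ satisfying the braid relations. Set $\bar b_i = a_{i+1}^{-1} a_i a_{i+1}$ and $\phi_l = a_{2l+1}^{l+1} a_{2l-1}^{l} \cdots a_5^{3} a_3^{2} a_1$. Then for all finite sequences $D = (d_1,\dots,d_{k_1})$ and $E = (e_1,\dots,e_{k_2})$ of elements of $G$, the concatenated sequence $D \frown (a_1, a_2, \dots, a_{2l+1}) \frown (a_1, a_2, \dots, a_{2l}) \frown E$ is Hurwitz equivalent up to simultaneous conjugation to $(\phi_l^{-1} d_1 \phi_l, \dots, \phi_l^{-1} d_{k_1} \phi_l) \frown (\bar b_2, \bar b_4, \dots, \bar b_{2l}) \frown (a_1, a_2, \dots, a_{2l}) \frown (a_{2l+1}, \dots, a_{2l+1}) \frown (\phi_l^{-1} e_1 \phi_l, \dots, \phi_l^{-1} e_{k_2} \phi_l)$, where $a_{2l+1}$ is repeated $l+1$ times. -/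
/-!
Induction on `l`. Passing from `l` to `l + 1`, write `s = a (2l+1)`, `t = a (2l+2)`,
`K = a (2l+3)` and `m = l + 1`. Since `t` and `K` commute with `a 1, …, a (2l)`, they can be slid
behind that block, so the induction hypothesis applies with `E` replaced by `(t, K, s, t) ⌢ E`;
conjugation by `φ_l` fixes `s` and `K` and sends `t` to `u = s⁻ᵐ t sᵐ`. Using only the braid
relations of the triple `s, t, K`, the segment `(s, …, s, u, K, s, u)` with `m` copies of `s` is
equivalent to `(v m, s, v (m+1), K, …, K)` with `m + 1` copies of `K`, where `v k = Kᵏ t K⁻ᵏ`: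
the move `(t, K, s, t, s) ∼ (K, t, K, s, t)` carries each `s` through `(t, K, s, t)` as a `K`.
Finally a global conjugation by `K⁻⁽ᵐ⁺¹⁾` turns `v m` into `b̄_{2l+2}`, `v (m+1)` into `t`, and
conjugation by `φ_l` into conjugation by `K^{m+1} φ_l = φ_{l+1}`.
-/

/-- One elementary (Hurwitz) transformation of sequences in a group. -/
def HurwitzStep {G : Type*} [Group G] (s t : List G) : Prop :=
  ∃ (l₁ l₂ : List G) (x y : G),
    (s = l₁ ++ x :: y :: l₂ ∧ t = l₁ ++ (x * y * x⁻¹) :: x :: l₂) ∨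
    (s = l₁ ++ x :: y :: l₂ ∧ t = l₁ ++ y :: (y⁻¹ * x * y) :: l₂)

/-- One move of Hurwitz equivalence up to simultaneous conjugation. -/
def HurwitzStepC {G : Type*} [Group G] (s t : List G) : Prop :=
  HurwitzStep s t ∨ ∃ ψ : G, t = s.map fun w => ψ * w * ψ⁻¹

/-- Hurwitz equivalence up to simultaneous conjugation. -/
def HurwitzEquivC {G : Type*} [Group G] : List G → List G → Prop :=
  Relation.ReflTransGen HurwitzStepC

/-- The sequence `a m, a (m+1), …, a k` (ascending indices). -/
def seqAsc {G : Type*} (a : ℕ → G) (m k : ℕ) : List G :=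
  (List.range (k + 1 - m)).map fun i => a (m + i)

/-- `φ l = a (2l+1) ^ (l+1) * a (2l-1) ^ l * ⋯ * a 5 ^ 3 * a 3 ^ 2 * a 1`. -/
def phiOdd {G : Type*} [Group G] (a : ℕ → G) (l : ℕ) : G :=
  ((List.range (l + 1)).map fun j => a (2 * (l - j) + 1) ^ (l - j + 1)).prod

section

variable {G : Type*}

section SeqAsc

variable (a : ℕ → G)

theorem mem_seqAsc {m k : ℕ} {z : G} : z ∈ seqAsc a m k ↔ ∃ i, m ≤ i ∧ i ≤ k ∧ a i = z := by
  simp only [seqAsc, List.mem_map, List.mem_range]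
  constructor
  · rintro ⟨i, hi, rfl⟩
    exact ⟨m + i, by omega, by omega, rfl⟩
  · rintro ⟨i, hmi, hik, rfl⟩
    exact ⟨i - m, by omega, by rw [Nat.add_sub_cancel' hmi]⟩

theorem seqAsc_add_two {m k : ℕ} (h : m ≤ k + 1) :
    seqAsc a m (k + 2) = seqAsc a m k ++ [a (k + 1), a (k + 2)] := by
  simp only [seqAsc, show k + 2 + 1 - m = k + 1 - m + 1 + 1 by omega, List.range_succ,
    List.map_append, List.append_assoc]
  simp [show m + (k + 1 - m) = k + 1 by omega, show m + (k + 1 - m + 1) = k + 2 by omega]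

end SeqAsc

variable [Group G]

def HurwitzEquiv : List G → List G → Prop := Relation.ReflTransGen HurwitzStep

infix:50 " ≈ₕ " => HurwitzEquiv

theorem HurwitzStep.symm {s t : List G} (h : HurwitzStep s t) : HurwitzStep t s := by
  obtain ⟨l₁, l₂, x, y, ⟨rfl, rfl⟩ | ⟨rfl, rfl⟩⟩ := h
  · refine ⟨l₁, l₂, x * y * x⁻¹, x, Or.inr ⟨rfl, ?_⟩⟩
    simp [mul_assoc]
  · refine ⟨l₁, l₂, y, y⁻¹ * x * y, Or.inl ⟨rfl, ?_⟩⟩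
    simp [mul_assoc]

theorem HurwitzStep.append_append {s t : List G} (h : HurwitzStep s t) (p q : List G) :
    HurwitzStep (p ++ s ++ q) (p ++ t ++ q) := by
  obtain ⟨l₁, l₂, x, y, ⟨rfl, rfl⟩ | ⟨rfl, rfl⟩⟩ := h
  · exact ⟨p ++ l₁, l₂ ++ q, x, y, Or.inl ⟨by simp, by simp⟩⟩
  · exact ⟨p ++ l₁, l₂ ++ q, x, y, Or.inr ⟨by simp, by simp⟩⟩


namespace HurwitzEquiv

theorem refl (s : List G) : s ≈ₕ s := Relation.ReflTransGen.refl

theorem trans {s t u : List G} (h : s ≈ₕ t) (h' : t ≈ₕ u) : s ≈ₕ u :=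
  Relation.ReflTransGen.trans h h'

instance : @Trans (List G) (List G) (List G) HurwitzEquiv HurwitzEquiv HurwitzEquiv :=
  ⟨trans⟩

theorem symm {s t : List G} (h : s ≈ₕ t) : t ≈ₕ s := by
  induction h with
  | refl => exact refl _
  | tail _ hst ih => exact Relation.ReflTransGen.head hst.symm ih

theorem append_append {s t : List G} (h : s ≈ₕ t) (p q : List G) :
    p ++ s ++ q ≈ₕ p ++ t ++ q :=
  Relation.ReflTransGen.lift (fun w => p ++ w ++ q) (fun _ _ h => h.append_append p q) _ _ h

theorem append_left {s t : List G} (h : s ≈ₕ t) (p : List G) : p ++ s ≈ₕ p ++ t := by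
  simpa using h.append_append p []

theorem append_right {s t : List G} (h : s ≈ₕ t) (q : List G) : s ++ q ≈ₕ t ++ q := by
  simpa using h.append_append [] q

theorem cons {s t : List G} (h : s ≈ₕ t) (x : G) : x :: s ≈ₕ x :: t :=
  h.append_left [x]

theorem hurwitzEquivC {s t : List G} (h : s ≈ₕ t) : HurwitzEquivC s t :=
  Relation.ReflTransGen.mono (fun _ _ => Or.inl) _ _ h

theorem cons_cons {x y z : G} (hz : x * y * x⁻¹ = z) (q : List G) :
    x :: y :: q ≈ₕ z :: x :: q :=
  Relation.ReflTransGen.single ⟨[], q, x, y, Or.inl ⟨rfl, by rw [hz]; rfl⟩⟩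

theorem append_cons (L : List G) (y : G) (q : List G) :
    L ++ y :: q ≈ₕ (L.prod * y * L.prod⁻¹) :: (L ++ q) := by
  induction L with
  | nil => simpa using refl (y :: q)
  | cons z L ih =>
    exact (ih.cons z).trans (cons_cons (by simp [mul_assoc]) _)

theorem append_cons_of_commute {L : List G} {y : G} (h : ∀ z ∈ L, Commute z y) (q : List G) :
    L ++ y :: q ≈ₕ y :: (L ++ q) := by
  simpa [(Commute.list_prod_left L y h).eq] using append_cons L y q

theorem replicate_append_cons (n : ℕ) (x y : G) (q : List G) :
    List.replicate n x ++ y :: q ≈ₕ (x ^ n * y * (x ^ n)⁻¹) :: (List.replicate n x ++ q) := by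
  simpa using append_cons (List.replicate n x) y q

theorem replicate_append_cons_of_commute {n : ℕ} {x y : G} (h : Commute x y) (q : List G) :
    List.replicate n x ++ y :: q ≈ₕ y :: (List.replicate n x ++ q) :=
  append_cons_of_commute (fun _ hz => (List.eq_of_mem_replicate hz) ▸ h) q

theorem append_append_comm {L M : List G} (h : ∀ x ∈ L, ∀ y ∈ M, Commute x y) (q : List G) :
    L ++ M ++ q ≈ₕ M ++ L ++ q := by
  induction M with
  | nil => simpa using refl _
  | cons y M ih =>
    calc L ++ y :: M ++ q ≈ₕ y :: (L ++ M ++ q) := by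
          simpa using append_cons_of_commute (fun x hx => h x hx y List.mem_cons_self) (M ++ q)
      _ ≈ₕ y :: (M ++ L ++ q) :=
          (ih fun x hx z hz => h x hx z (List.mem_cons_of_mem y hz)).cons y
      _ = y :: M ++ L ++ q := rfl

end HurwitzEquiv

section BraidTriple

variable {s t K : G}

theorem hurwitzEquiv_braid_rotate (hst : s * t * s = t * s * t) (htK : t * K * t = K * t * K) :
    [t, K, s, t, s] ≈ₕ [K, t, K, s, t] := by
  have hts : s * (t * s * t⁻¹) * s⁻¹ = t := by
    rw [show s * (t * s * t⁻¹) * s⁻¹ = s * t * s * t⁻¹ * s⁻¹ by group, hst]; group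
  have hKt : t * (K * t * K⁻¹) * t⁻¹ = K := by
    rw [show t * (K * t * K⁻¹) * t⁻¹ = t * K * t * K⁻¹ * t⁻¹ by group, htK]; group
  calc [t, K, s, t, s] ≈ₕ [t, K, s, t * s * t⁻¹, t] :=
        (HurwitzEquiv.cons_cons rfl []).append_left [t, K, s]
    _ ≈ₕ [t, K, t, s, t] := (HurwitzEquiv.cons_cons hts [t]).append_left [t, K]
    _ ≈ₕ [t, K * t * K⁻¹, K, s, t] := (HurwitzEquiv.cons_cons rfl [s, t]).cons t
    _ ≈ₕ [K, t, K, s, t] := HurwitzEquiv.cons_cons hKt [K, s, t]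

theorem hurwitzEquiv_braid_replicate (hst : s * t * s = t * s * t) (htK : t * K * t = K * t * K)
    (m : ℕ) :
    [t, K, s, t] ++ List.replicate m s ≈ₕ List.replicate m K ++ [t, K, s, t] := by
  induction m with
  | zero => simpa using HurwitzEquiv.refl _
  | succ m ih =>
    calc [t, K, s, t] ++ List.replicate (m + 1) s ≈ₕ K :: ([t, K, s, t] ++ List.replicate m s) := by
          simpa [List.replicate_succ] using
            (hurwitzEquiv_braid_rotate hst htK).append_right (List.replicate m s)
      _ ≈ₕ K :: (List.replicate m K ++ [t, K, s, t]) := ih.cons K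
      _ = List.replicate (m + 1) K ++ [t, K, s, t] := rfl

theorem hurwitzEquiv_replicate_conj_braid (hsK : Commute s K) (m : ℕ) :
    List.replicate m s ++
        [(s ^ m)⁻¹ * t * s ^ m, K, s, (s ^ m)⁻¹ * t * s ^ m] ≈ₕ
      [t, K, s, t] ++ List.replicate m s := by
  set u := (s ^ m)⁻¹ * t * s ^ m
  have hu : s ^ m * u * (s ^ m)⁻¹ = t := by simp only [u]; group
  calc List.replicate m s ++ [u, K, s, u] ≈ₕ t :: (List.replicate m s ++ [K, s, u]) := by
        simpa only [hu] using HurwitzEquiv.replicate_append_cons m s u [K, s, u]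
    _ ≈ₕ t :: K :: (List.replicate m s ++ [s, u]) :=
        (HurwitzEquiv.replicate_append_cons_of_commute hsK [s, u]).cons t
    _ = t :: K :: s :: (List.replicate m s ++ [u]) := by
        rw [← List.singleton_append (l := [u]), ← List.append_assoc, ← List.replicate_succ',
          List.replicate_succ, List.cons_append]
    _ ≈ₕ t :: K :: s :: t :: List.replicate m s := by
        simpa only [hu, List.append_nil] using
          (((HurwitzEquiv.replicate_append_cons m s u []).cons s).cons K).cons t

theorem hurwitzEquiv_replicate_braid_conj (hsK : Commute s K) (m : ℕ) :
    List.replicate m K ++ [t, K, s, t] ≈ₕ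
      [K ^ m * t * (K ^ m)⁻¹, s, K ^ (m + 1) * t * (K ^ (m + 1))⁻¹] ++
        List.replicate (m + 1) K := by
  calc List.replicate m K ++ [t, K, s, t]
        ≈ₕ (K ^ m * t * (K ^ m)⁻¹) :: (List.replicate m K ++ [K, s, t]) :=
        HurwitzEquiv.replicate_append_cons m K t [K, s, t]
    _ = (K ^ m * t * (K ^ m)⁻¹) :: (List.replicate (m + 1) K ++ [s, t]) := by
        simp [List.replicate_succ']
    _ ≈ₕ (K ^ m * t * (K ^ m)⁻¹) :: s :: (List.replicate (m + 1) K ++ [t]) :=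
        (HurwitzEquiv.replicate_append_cons_of_commute hsK.symm [t]).cons _
    _ ≈ₕ _ := by
        simpa using ((HurwitzEquiv.replicate_append_cons (m + 1) K t []).cons s).cons _

theorem hurwitzEquiv_replicate_conj_braid_triple (hst : s * t * s = t * s * t)
    (htK : t * K * t = K * t * K) (hsK : Commute s K) (m : ℕ) :
    List.replicate m s ++
        [(s ^ m)⁻¹ * t * s ^ m, K, s, (s ^ m)⁻¹ * t * s ^ m] ≈ₕ
      [K ^ m * t * (K ^ m)⁻¹, s, K ^ (m + 1) * t * (K ^ (m + 1))⁻¹] ++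
        List.replicate (m + 1) K :=
  (hurwitzEquiv_replicate_conj_braid hsK m).trans
    ((hurwitzEquiv_braid_replicate hst htK m).trans (hurwitzEquiv_replicate_braid_conj hsK m))

end BraidTriple

namespace HurwitzEquivC

theorem trans {s t u : List G} (h : HurwitzEquivC s t) (h' : HurwitzEquivC t u) :
    HurwitzEquivC s u :=
  Relation.ReflTransGen.trans h h'

instance : @Trans (List G) (List G) (List G) HurwitzEquivC HurwitzEquivC HurwitzEquivC :=
  ⟨trans⟩

theorem of_map_conj_eq (ψ : G) {s t : List G} (h : s.map (fun w => ψ * w * ψ⁻¹) = t) :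
    HurwitzEquivC s t :=
  Relation.ReflTransGen.single (Or.inr ⟨ψ, h.symm⟩)

end HurwitzEquivC

theorem List.map_conj_eq_self {g : G} {L : List G} (h : ∀ z ∈ L, Commute g z) :
    L.map (fun w => g * w * g⁻¹) = L :=
  (List.map_congr_left fun z hz => (h z hz).mul_inv_cancel).trans (List.map_id L)

theorem map_conj_inv_pow_succ_braid {D E A₀ B : List G} {s t K φ : G} (m : ℕ)
    (hsK : Commute s K) (hA₀K : ∀ z ∈ A₀, Commute z K) (hBK : ∀ z ∈ B, Commute z K)
    (hφK : Commute φ K) :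
    (D.map (fun d => φ⁻¹ * d * φ) ++ B ++
        (K ^ m * t * (K ^ m)⁻¹ :: (A₀ ++ [s, K ^ (m + 1) * t * (K ^ (m + 1))⁻¹])) ++
        List.replicate (m + 1) K ++ E.map (fun e => φ⁻¹ * e * φ)).map
      (fun w => (K ^ (m + 1))⁻¹ * w * (K ^ (m + 1))⁻¹⁻¹) =
    D.map (fun d => (K ^ (m + 1) * φ)⁻¹ * d * (K ^ (m + 1) * φ)) ++ (B ++ [K⁻¹ * t * K]) ++
      (A₀ ++ [s, t]) ++ List.replicate (m + 1) K ++
      E.map (fun e => (K ^ (m + 1) * φ)⁻¹ * e * (K ^ (m + 1) * φ)) := by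
  have hφ : ∀ w, (K ^ (m + 1))⁻¹ * (φ⁻¹ * w * φ) * (K ^ (m + 1))⁻¹⁻¹ =
      (K ^ (m + 1) * φ)⁻¹ * w * (K ^ (m + 1) * φ) := fun w => by
    rw [← (hφK.pow_right (m + 1)).eq]; group
  have hB : B.map (fun w => (K ^ (m + 1))⁻¹ * w * (K ^ (m + 1))⁻¹⁻¹) = B :=
    List.map_conj_eq_self fun z hz => ((hBK z hz).pow_right (m + 1)).inv_right.symm
  have hA₀ : A₀.map (fun w => (K ^ (m + 1))⁻¹ * w * (K ^ (m + 1))⁻¹⁻¹) = A₀ :=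
    List.map_conj_eq_self fun z hz => ((hA₀K z hz).pow_right (m + 1)).inv_right.symm
  have hs : (K ^ (m + 1))⁻¹ * s * (K ^ (m + 1))⁻¹⁻¹ = s :=
    (hsK.pow_right (m + 1)).inv_right.symm.mul_inv_cancel
  have hv : (K ^ (m + 1))⁻¹ * (K ^ m * t * (K ^ m)⁻¹) * (K ^ (m + 1))⁻¹⁻¹ = K⁻¹ * t * K := by
    group
  have hv' : (K ^ (m + 1))⁻¹ * (K ^ (m + 1) * t * (K ^ (m + 1))⁻¹) * (K ^ (m + 1))⁻¹⁻¹ = t := by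
    group
  have hK : (K ^ (m + 1))⁻¹ * K * (K ^ (m + 1))⁻¹⁻¹ = K := by group
  simp only [List.map_append, List.map_cons, List.map_map, List.map_replicate,
    List.map_nil, Function.comp_def, hφ, hB, hA₀, hs, hv, hv', hK]
  simp

theorem hurwitzEquivC_braid_step {D E A₀ A₁ B : List G} {s t K φ : G} (m : ℕ)
    (hst : s * t * s = t * s * t) (htK : t * K * t = K * t * K) (hsK : Commute s K)
    (hA₀t : ∀ z ∈ A₀, Commute z t) (hA₀K : ∀ z ∈ A₀, Commute z K) (hBK : ∀ z ∈ B, Commute z K)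
    (hφs : Commute φ s) (hφK : Commute φ K) (hφt : φ⁻¹ * t * φ = (s ^ m)⁻¹ * t * s ^ m)
    (ih : HurwitzEquivC (D ++ A₁ ++ A₀ ++ ([t, K, s, t] ++ E))
      (D.map (fun d => φ⁻¹ * d * φ) ++ B ++ A₀ ++ List.replicate m s ++
        ([t, K, s, t] ++ E).map (fun e => φ⁻¹ * e * φ))) :
    HurwitzEquivC (D ++ (A₁ ++ [t, K]) ++ (A₀ ++ [s, t]) ++ E)
      (D.map (fun d => (K ^ (m + 1) * φ)⁻¹ * d * (K ^ (m + 1) * φ)) ++ (B ++ [K⁻¹ * t * K]) ++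
        (A₀ ++ [s, t]) ++ List.replicate (m + 1) K ++
        E.map (fun e => (K ^ (m + 1) * φ)⁻¹ * e * (K ^ (m + 1) * φ))) := by
  set u := (s ^ m)⁻¹ * t * s ^ m
  set v := fun k : ℕ => K ^ k * t * (K ^ k)⁻¹
  set c := fun w => φ⁻¹ * w * φ
  have hcE : ([t, K, s, t] ++ E).map c = [u, K, s, u] ++ E.map c := by
    simp [c, hφt, hφK.inv_mul_cancel, hφs.inv_mul_cancel]
  have hA₀v : ∀ z ∈ A₀, Commute z (v m) := fun z hz =>
    (((hA₀K z hz).pow_right m).mul_right (hA₀t z hz)).mul_right ((hA₀K z hz).pow_right m).inv_right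
  calc HurwitzEquivC (D ++ (A₁ ++ [t, K]) ++ (A₀ ++ [s, t]) ++ E)
        (D ++ A₁ ++ A₀ ++ ([t, K, s, t] ++ E)) := by
        have := (HurwitzEquiv.append_append_comm (L := A₀) (M := [t, K])
          (by simpa using fun z hz => ⟨hA₀t z hz, hA₀K z hz⟩) ([s, t] ++ E)).symm
        simpa using (this.append_left (D ++ A₁)).hurwitzEquivC
    HurwitzEquivC _ (D.map c ++ B ++ A₀ ++ (List.replicate m s ++ [u, K, s, u]) ++ E.map c) := by
        rw [hcE] at ih
        simpa using ih
    HurwitzEquivC _ (D.map c ++ B ++ A₀ ++ ([v m, s, v (m + 1)] ++ List.replicate (m + 1) K) ++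
        E.map c) :=
      ((hurwitzEquiv_replicate_conj_braid_triple hst htK hsK m).append_append _ _).hurwitzEquivC
    HurwitzEquivC _ (D.map c ++ B ++ (v m :: (A₀ ++ [s, v (m + 1)])) ++
        List.replicate (m + 1) K ++ E.map c) := by
        simpa using ((HurwitzEquiv.append_cons_of_commute hA₀v _).append_left
          (D.map c ++ B)).hurwitzEquivC
    HurwitzEquivC _ _ :=
      HurwitzEquivC.of_map_conj_eq _ (map_conj_inv_pow_succ_braid m hsK hA₀K hBK hφK)

theorem conj_mul_of_commute {g ψ t : G} (h : Commute ψ (g⁻¹ * t * g)) :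
    (g * ψ)⁻¹ * t * (g * ψ) = g⁻¹ * t * g := by
  rw [← h.inv_mul_cancel]; group

section PhiOdd

variable (a : ℕ → G)

theorem phiOdd_succ (l : ℕ) : phiOdd a (l + 1) = a (2 * l + 3) ^ (l + 2) * phiOdd a l := by
  rw [phiOdd, List.range_succ_eq_map, List.map_cons, List.prod_cons, List.map_map, phiOdd]
  congr 2
  exact List.map_congr_left fun j _ => by simp

theorem exists_phiOdd_eq_pow_mul (l : ℕ) :
    ∃ ψ, phiOdd a l = a (2 * l + 1) ^ (l + 1) * ψ ∧
      ∀ c, (∀ j < l, Commute (a (2 * j + 1)) c) → Commute ψ c := by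
  refine ⟨((List.range l).map fun j => a (2 * (l - (j + 1)) + 1) ^ (l - (j + 1) + 1)).prod,
    by simp [phiOdd, List.range_succ_eq_map, Function.comp_def], fun c hc => ?_⟩
  refine Commute.list_prod_left _ _ fun x hx => ?_
  obtain ⟨j, hj, rfl⟩ := List.mem_map.mp hx
  exact (hc _ (by simp at hj; omega)).pow_left _

end PhiOdd

def PhiOddHurwitz (a : ℕ → G) (l : ℕ) : Prop :=
  ∀ D E : List G, HurwitzEquivC
    (D ++ seqAsc a 1 (2 * l + 1) ++ seqAsc a 1 (2 * l) ++ E)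
    ((D.map fun d => (phiOdd a l)⁻¹ * d * phiOdd a l) ++
      ((List.range l).map fun j => (a (2 * j + 3))⁻¹ * a (2 * j + 2) * a (2 * j + 3)) ++
      seqAsc a 1 (2 * l) ++
      List.replicate (l + 1) (a (2 * l + 1)) ++
      (E.map fun e => (phiOdd a l)⁻¹ * e * phiOdd a l))

theorem phiOddHurwitz_zero (a : ℕ → G) : PhiOddHurwitz a 0 := fun D E =>
  HurwitzEquivC.of_map_conj_eq (a 1)⁻¹ (by simp [seqAsc, phiOdd])

theorem PhiOddHurwitz.succ {a : ℕ → G} {l : ℕ}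
    (hbraid : ∀ i, 1 ≤ i → i + 1 ≤ 2 * (l + 1) + 1 →
      a i * a (i + 1) * a i = a (i + 1) * a i * a (i + 1))
    (hcomm : ∀ i j, 1 ≤ i → j ≤ 2 * (l + 1) + 1 → i + 2 ≤ j → a i * a j = a j * a i)
    (h : PhiOddHurwitz a l) : PhiOddHurwitz a (l + 1) := by
  intro D E
  obtain ⟨ψ, hφ, hψ⟩ := exists_phiOdd_eq_pow_mul a l
  set s := a (2 * l + 1)
  set t := a (2 * l + 2)
  set K := a (2 * l + 3)
  have hst : s * t * s = t * s * t := hbraid (2 * l + 1) (by omega) (by omega)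
  have htK : t * K * t = K * t * K := hbraid (2 * l + 2) (by omega) (by omega)
  have hsK : Commute s K := hcomm _ _ (by omega) (by omega) (by omega)
  have hA₀ : ∀ k, 2 * l + 2 ≤ k → k ≤ 2 * (l + 1) + 1 →
      ∀ z ∈ seqAsc a 1 (2 * l), Commute z (a k) := by
    intro k hk₁ hk₂ z hz
    obtain ⟨i, hi₁, hi₂, rfl⟩ := (mem_seqAsc a).mp hz
    exact hcomm i k hi₁ hk₂ (by omega)
  have hBK : ∀ z ∈ (List.range l).map (fun j => (a (2 * j + 3))⁻¹ * a (2 * j + 2) * a (2 * j + 3)),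
      Commute z K := by
    simp only [List.mem_map, List.mem_range]
    rintro _ ⟨j, hj, rfl⟩
    have h₂ : Commute (a (2 * j + 2)) K := hcomm _ _ (by omega) (by omega) (by omega)
    have h₃ : Commute (a (2 * j + 3)) K := hcomm _ _ (by omega) (by omega) (by omega)
    exact (h₃.inv_left.mul_left h₂).mul_left h₃
  have hψa : ∀ k, 2 * l + 1 ≤ k → k ≤ 2 * (l + 1) + 1 → Commute ψ (a k) := fun k hk₁ hk₂ =>
    hψ _ fun j hj => hcomm _ _ (by omega) hk₂ (by omega)
  have hψs : Commute ψ s := hψa (2 * l + 1) le_rfl (by omega)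
  have hψt : Commute ψ t := hψa (2 * l + 2) (by omega) (by omega)
  have hφs : Commute (phiOdd a l) s := hφ ▸ ((Commute.refl s).pow_left _).mul_left hψs
  have hφK : Commute (phiOdd a l) K :=
    hφ ▸ (hsK.pow_left _).mul_left (hψa (2 * l + 3) (by omega) le_rfl)
  have hφt : (phiOdd a l)⁻¹ * t * phiOdd a l = (s ^ (l + 1))⁻¹ * t * s ^ (l + 1) :=
    hφ ▸ conj_mul_of_commute
      (((hψs.pow_right _).inv_right.mul_right hψt).mul_right (hψs.pow_right _))
  rw [show 2 * (l + 1) + 1 = 2 * l + 1 + 2 by ring, show 2 * (l + 1) = 2 * l + 2 by ring,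
    seqAsc_add_two a (by omega), seqAsc_add_two a (by omega), List.range_succ, List.map_append,
    phiOdd_succ]
  exact hurwitzEquivC_braid_step (l + 1) hst htK hsK (hA₀ _ le_rfl (by omega))
    (hA₀ _ (by omega) le_rfl) hBK hφs hφK hφt (h D ([t, K, s, t] ++ E))

end

theorem statement6_general {G : Type*} [Group G] (l : ℕ) (a : ℕ → G)
    (hbraid : ∀ i, 1 ≤ i → i + 1 ≤ 2 * l + 1 →
      a i * a (i + 1) * a i = a (i + 1) * a i * a (i + 1))
    (hcomm : ∀ i j, 1 ≤ i → j ≤ 2 * l + 1 → i + 2 ≤ j → a i * a j = a j * a i)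
    (D E : List G) :
    HurwitzEquivC
      (D ++ seqAsc a 1 (2 * l + 1) ++ seqAsc a 1 (2 * l) ++ E)
      ((D.map fun d => (phiOdd a l)⁻¹ * d * phiOdd a l) ++
        ((List.range l).map fun j =>
          (a (2 * j + 3))⁻¹ * a (2 * j + 2) * a (2 * j + 3)) ++
        seqAsc a 1 (2 * l) ++
        List.replicate (l + 1) (a (2 * l + 1)) ++
        (E.map fun e => (phiOdd a l)⁻¹ * e * phiOdd a l)) := by
  induction l generalizing D E with
  | zero => exact phiOddHurwitz_zero a D E
  | succ l ih =>
    refine PhiOddHurwitz.succ hbraid hcomm (fun D E => ih ?_ ?_ D E) D E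
    · exact fun i h₁ h₂ => hbraid i h₁ (by omega)
    · exact fun i j h₁ h₂ => hcomm i j h₁ (by omega)

/-- Lemma 4.2(b) of the paper: with `b̄ i = (a (i+1))⁻¹ * a i * a (i+1)`,
`D ⌢ (a 1, …, a (2l+1)) ⌢ (a 1, …, a (2l)) ⌢ E` is Hurwitz equivalent up to simultaneous
conjugation to
`φ⁻¹ D φ ⌢ (b̄ 2, b̄ 4, …, b̄ (2l)) ⌢ (a 1, …, a (2l)) ⌢ (a (2l+1))^{l+1} ⌢ φ⁻¹ E φ`. -/
theorem statement6 {G : Type*} [Group G] (l : ℕ) (hl : 1 ≤ l) (a : ℕ → G)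
    (hbraid : ∀ i, 1 ≤ i → i + 1 ≤ 2 * l + 1 →
      a i * a (i + 1) * a i = a (i + 1) * a i * a (i + 1))
    (hcomm : ∀ i j, 1 ≤ i → j ≤ 2 * l + 1 → i + 2 ≤ j → a i * a j = a j * a i)
    (D E : List G) :
    HurwitzEquivC
      (D ++ seqAsc a 1 (2 * l + 1) ++ seqAsc a 1 (2 * l) ++ E)
      ((D.map fun d => (phiOdd a l)⁻¹ * d * phiOdd a l) ++
        ((List.range l).map fun j =>
          (a (2 * j + 3))⁻¹ * a (2 * j + 2) * a (2 * j + 3)) ++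
        seqAsc a 1 (2 * l) ++
        List.replicate (l + 1) (a (2 * l + 1)) ++
        (E.map fun e => (phiOdd a l)⁻¹ * e * phiOdd a l)) :=
  statement6_general l a hbraid hcomm D E
end

section
/- Let $g \ge 2$ and let $G$ be a group containing elements $\alpha_1,\dots,\alpha_{2g}$ satisfying the braid relations, together with elements $\alpha_{2g+1}$, $\alpha'$, $\delta$ of $G$ such that: $\alpha_{2g+1}$ commutes with $\alpha'$; the chain relation $\alpha_{2g+1} \cdot \alpha' = (\alpha_1 \alpha_2 \cdots \alpha_{2g-1})^{2g}$ holds; $\delta = (\alpha_1 \alpha_2 \cdots \alpha_{2g})^{4g+2}$; and $\delta$ commutes with $\alpha'$. Then $\delta = (\alpha_{2g+1} \cdot \alpha_{2g} \alpha_{2g-1} \cdots \alpha_2 \alpha_1 \cdot \alpha_1 \alpha_2 \cdots \alpha_{2g} \cdot \alpha')^2$. -/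
/-- The product `a k * a (k-1) * ⋯ * a m` (descending indices). -/
def prodDesc {G : Type*} [Group G] (a : ℕ → G) (k m : ℕ) : G :=
  ((List.range (k + 1 - m)).map fun i => a (k - i)).prod

/-- The product `a m * a (m+1) * ⋯ * a k` (ascending indices). -/
def prodAsc {G : Type*} [Group G] (a : ℕ → G) (m k : ℕ) : G :=
  ((List.range (k + 1 - m)).map fun i => a (m + i)).prod

section Aux
variable {G : Type*} [Group G]

lemma prodAsc_self (a : ℕ → G) (m : ℕ) : prodAsc a m m = a m := by
  have h : m + 1 - m = 1 := by omega
  simp [prodAsc, h, List.range_succ]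

lemma prodDesc_self (a : ℕ → G) (m : ℕ) : prodDesc a m m = a m := by
  have h : m + 1 - m = 1 := by omega
  simp [prodDesc, h, List.range_succ]

lemma prodAsc_succ (a : ℕ → G) (m k : ℕ) (h : m ≤ k + 1) :
    prodAsc a m (k + 1) = prodAsc a m k * a (k + 1) := by
  unfold prodAsc
  have h1 : k + 1 + 1 - m = (k + 1 - m) + 1 := by omega
  rw [h1, List.range_succ, List.map_append, List.prod_append]
  simp only [List.map_cons, List.map_nil, List.prod_cons, List.prod_nil, mul_one]
  congr 2
  omega

lemma prodDesc_succ (a : ℕ → G) (k m : ℕ) (h : m ≤ k + 1) :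
    prodDesc a (k + 1) m = a (k + 1) * prodDesc a k m := by
  unfold prodDesc
  have h1 : k + 1 + 1 - m = (k + 1 - m) + 1 := by omega
  rw [h1, List.range_succ_eq_map]
  simp only [List.map_cons, List.prod_cons, List.map_map, Nat.sub_zero]
  congr 1
  refine congrArg _ (List.map_congr_left fun i _ => ?_)
  simp [Function.comp, Nat.succ_sub_succ]

lemma commute_prodAsc (x : G) (a : ℕ → G) (m k : ℕ)
    (h : ∀ i, m ≤ i → i ≤ k → Commute x (a i)) : Commute x (prodAsc a m k) := by
  unfold prodAsc
  apply Commute.list_prod_right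
  intro y hy
  simp only [List.mem_map, List.mem_range] at hy
  obtain ⟨i, hi, rfl⟩ := hy
  exact h _ (by omega) (by omega)

end Aux

section Main
variable {G : Type*} [Group G] (g : ℕ) (α : ℕ → G)
    (hbraid : ∀ i, 1 ≤ i → i + 1 ≤ 2 * g →
      α i * α (i + 1) * α i = α (i + 1) * α i * α (i + 1))
    (hcomm : ∀ i j, 1 ≤ i → j ≤ 2 * g → i + 2 ≤ j → α i * α j = α j * α i)

include hbraid hcomm

lemma shift : ∀ k i, 1 ≤ i → i + 1 ≤ k → k ≤ 2 * g →
    prodAsc α 1 k * α i = α (i + 1) * prodAsc α 1 k := by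
  intro k
  induction k with
  | zero => intro i hi hik hk; omega
  | succ k ih =>
    intro i hi hik hk
    rcases Nat.lt_or_ge (i + 1) (k + 1) with h | h
    · -- i + 1 ≤ k
      have hik' : i + 1 ≤ k := by omega
      rw [prodAsc_succ α 1 k (by omega)]
      have hc : α i * α (k + 1) = α (k + 1) * α i := hcomm i (k + 1) hi hk (by omega)
      calc prodAsc α 1 k * α (k + 1) * α i
          = prodAsc α 1 k * (α i * α (k + 1)) := by rw [mul_assoc, ← hc]
        _ = (prodAsc α 1 k * α i) * α (k + 1) := by rw [mul_assoc]
        _ = α (i + 1) * prodAsc α 1 k * α (k + 1) := by rw [ih i hi hik' (by omega)]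
        _ = α (i + 1) * (prodAsc α 1 k * α (k + 1)) := by rw [mul_assoc]
    · -- i = k
      have hik2 : i = k := by omega
      subst hik2
      obtain ⟨j, rfl⟩ : ∃ j, i = j + 1 := ⟨i - 1, by omega⟩
      have hP : Commute (α (j + 2)) (prodAsc α 1 j) := by
        apply commute_prodAsc
        intro l hl1 hl2
        exact (hcomm l (j + 2) hl1 (by omega) (by omega)).symm
      have hb := hbraid (j + 1) (by omega) (by omega)
      rw [prodAsc_succ α 1 (j + 1) (by omega), prodAsc_succ α 1 j (by omega)]
      calc prodAsc α 1 j * α (j + 1) * α (j + 2) * α (j + 1)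
          = prodAsc α 1 j * (α (j + 1) * α (j + 2) * α (j + 1)) := by
            simp [mul_assoc]
        _ = prodAsc α 1 j * (α (j + 2) * α (j + 1) * α (j + 2)) := by rw [hb]
        _ = (prodAsc α 1 j * α (j + 2)) * (α (j + 1) * α (j + 2)) := by
            simp [mul_assoc]
        _ = (α (j + 2) * prodAsc α 1 j) * (α (j + 1) * α (j + 2)) := by
            rw [← hP.eq]
        _ = α (j + 2) * prodAsc α 1 j * α (j + 1) * α (j + 2) := by
            simp [mul_assoc]
        _ = α (j + 1 + 1) * (prodAsc α 1 j * α (j + 1) * α (j + 2)) := by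
            simp [mul_assoc]

lemma lemF : ∀ l j, 1 ≤ j → j ≤ l → ∀ k, l + 1 ≤ k → k ≤ 2 * g →
    prodAsc α 1 k * prodDesc α l j = prodDesc α (l + 1) (j + 1) * prodAsc α 1 k := by
  intro l
  induction l with
  | zero => intro j h1 h2; omega
  | succ l ih =>
    intro j hj1 hjl k hlk hk
    rcases Nat.lt_or_ge l j with h | h
    · -- j = l + 1
      have : j = l + 1 := by omega
      subst this
      rw [prodDesc_self, prodDesc_self]
      exact shift g α hbraid hcomm k (l + 1) (by omega) (by omega) hk
    · -- j ≤ l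
      rw [prodDesc_succ α l j (by omega), prodDesc_succ α (l + 1) (j + 1) (by omega)]
      calc prodAsc α 1 k * (α (l + 1) * prodDesc α l j)
          = (prodAsc α 1 k * α (l + 1)) * prodDesc α l j := by rw [mul_assoc]
        _ = α (l + 2) * prodAsc α 1 k * prodDesc α l j := by
            rw [shift g α hbraid hcomm k (l + 1) (by omega) (by omega) hk]
        _ = α (l + 2) * (prodDesc α (l + 1) (j + 1) * prodAsc α 1 k) := by
            rw [mul_assoc, ih j hj1 h k (by omega) hk]
        _ = α (l + 1 + 1) * prodDesc α (l + 1) (j + 1) * prodAsc α 1 k := by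
            rw [mul_assoc]

lemma lemE (K : ℕ) (hK1 : 1 ≤ K) (hK : K + 1 ≤ 2 * g) :
    ∀ m, m ≤ K → (prodAsc α 1 K) ^ m * prodDesc α (K + 1) 1
      = prodDesc α (K + 1) (m + 1) * (prodAsc α 1 (K + 1)) ^ m := by
  intro m
  induction m with
  | zero => intro _; simp
  | succ m ih =>
    intro hm
    have ih' := ih (by omega)
    calc (prodAsc α 1 K) ^ (m + 1) * prodDesc α (K + 1) 1
        = prodAsc α 1 K * ((prodAsc α 1 K) ^ m * prodDesc α (K + 1) 1) := by
          rw [pow_succ']; rw [mul_assoc]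
      _ = prodAsc α 1 K * (prodDesc α (K + 1) (m + 1) * (prodAsc α 1 (K + 1)) ^ m) := by
          rw [ih']
      _ = (prodAsc α 1 K * α (K + 1)) * prodDesc α K (m + 1) * (prodAsc α 1 (K + 1)) ^ m := by
          rw [prodDesc_succ α K (m + 1) (by omega)]; simp [mul_assoc]
      _ = prodAsc α 1 (K + 1) * prodDesc α K (m + 1) * (prodAsc α 1 (K + 1)) ^ m := by
          rw [← prodAsc_succ α 1 K (by omega)]
      _ = prodDesc α (K + 1) (m + 2) * prodAsc α 1 (K + 1) * (prodAsc α 1 (K + 1)) ^ m := by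
          rw [lemF g α hbraid hcomm K (m + 1) (by omega) (by omega) (K + 1) le_rfl hK]
      _ = prodDesc α (K + 1) (m + 1 + 1) * (prodAsc α 1 (K + 1)) ^ (m + 1) := by
          rw [mul_assoc, ← pow_succ']

lemma lemT (K : ℕ) (hK1 : 1 ≤ K) (hK : K + 1 ≤ 2 * g) :
    (prodAsc α 1 K) ^ (K + 1) * prodDesc α (K + 1) 1 * prodAsc α 1 (K + 1)
      = (prodAsc α 1 (K + 1)) ^ (K + 2) := by
  have hE := lemE g α hbraid hcomm K hK1 hK K le_rfl
  rw [prodDesc_self] at hE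
  calc (prodAsc α 1 K) ^ (K + 1) * prodDesc α (K + 1) 1 * prodAsc α 1 (K + 1)
      = prodAsc α 1 K * ((prodAsc α 1 K) ^ K * prodDesc α (K + 1) 1) * prodAsc α 1 (K + 1) := by
        rw [pow_succ', mul_assoc (prodAsc α 1 K)]
    _ = prodAsc α 1 K * (α (K + 1) * (prodAsc α 1 (K + 1)) ^ K) * prodAsc α 1 (K + 1) := by
        rw [hE]
    _ = (prodAsc α 1 K * α (K + 1)) * ((prodAsc α 1 (K + 1)) ^ K * prodAsc α 1 (K + 1)) := by
        simp [mul_assoc]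
    _ = prodAsc α 1 (K + 1) * (prodAsc α 1 (K + 1)) ^ (K + 1) := by
        rw [← prodAsc_succ α 1 K (by omega), ← pow_succ]
    _ = (prodAsc α 1 (K + 1)) ^ (K + 2) := by rw [← pow_succ']

end Main

/-- Lemma 5.2 of the paper: if `α 1, …, α (2g)` satisfy the braid relations
(`g ≥ 2`), `α2g1` commutes with `α'`, the chain relations
`α2g1 * α' = (α 1 ⋯ α (2g-1))^(2g)` and `δ = (α 1 ⋯ α (2g))^(4g+2)` hold, and `δ`
commutes with `α'`, then
`δ = (α2g1 * α (2g) ⋯ α 1 * α 1 ⋯ α (2g) * α')^2`. -/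
theorem statement8 {G : Type*} [Group G] (g : ℕ) (hg : 2 ≤ g) (α : ℕ → G)
    (hbraid : ∀ i, 1 ≤ i → i + 1 ≤ 2 * g →
      α i * α (i + 1) * α i = α (i + 1) * α i * α (i + 1))
    (hcomm : ∀ i j, 1 ≤ i → j ≤ 2 * g → i + 2 ≤ j → α i * α j = α j * α i)
    (α2g1 α' δ : G)
    (h1 : Commute α2g1 α')
    (h2 : α2g1 * α' = (prodAsc α 1 (2 * g - 1)) ^ (2 * g))
    (h3 : δ = (prodAsc α 1 (2 * g)) ^ (4 * g + 2))
    (h4 : Commute δ α') :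
    δ = (α2g1 * prodDesc α (2 * g) 1 * prodAsc α 1 (2 * g) * α') ^ 2 := by
  set K := 2 * g - 1 with hKdef
  have hK1 : 1 ≤ K := by omega
  have h2g : 2 * g = K + 1 := by omega
  have hT := lemT g α hbraid hcomm K hK1 (by omega)
  rw [h2g] at h2 h3 ⊢
  rw [← h2] at hT
  set c := prodAsc α 1 (K + 1) with hc
  set d := prodDesc α (K + 1) 1 with hd
  have hdc : d * c = (α2g1 * α')⁻¹ * c ^ (K + 2) := by
    rw [← hT]; group
  have hx : α2g1 * d * c * α' = α'⁻¹ * (c ^ (K + 2) * α') := by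
    rw [mul_assoc α2g1 d c, hdc, mul_inv_rev]
    have h1' : α2g1 * α'⁻¹ = α'⁻¹ * α2g1 := (h1.inv_right).eq
    calc α2g1 * (α'⁻¹ * α2g1⁻¹ * c ^ (K + 2)) * α'
        = (α2g1 * α'⁻¹) * (α2g1⁻¹ * c ^ (K + 2) * α') := by simp [mul_assoc]
      _ = (α'⁻¹ * α2g1) * (α2g1⁻¹ * c ^ (K + 2) * α') := by rw [h1']
      _ = α'⁻¹ * (c ^ (K + 2) * α') := by group
  rw [hx]
  have hpow : c ^ (K + 2) * α' * (α'⁻¹ * (c ^ (K + 2) * α')) = c ^ (4 * g + 2) * α' := by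
    have : K + 2 + (K + 2) = 4 * g + 2 := by omega
    calc c ^ (K + 2) * α' * (α'⁻¹ * (c ^ (K + 2) * α'))
        = c ^ (K + 2) * c ^ (K + 2) * α' := by group
      _ = c ^ (4 * g + 2) * α' := by rw [← pow_add, this]
  calc δ = α'⁻¹ * (δ * α') := by rw [h4.eq, inv_mul_cancel_left]
    _ = α'⁻¹ * (c ^ (4 * g + 2) * α') := by rw [h3]
    _ = (α'⁻¹ * (c ^ (K + 2) * α')) ^ 2 := by
        rw [sq]; rw [mul_assoc α'⁻¹ (c ^ (K+2) * α'), hpow, ← mul_assoc]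
end
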